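/- arXiv:1606.07896 — 3 statements merged into one kernel-verified Lean document; each statement's English description precedes it below -/
import Mathlib

section
/- Let $a$, $v$, $w$ be positive reals with $w < v$, and let $\theta \in \mathbb{R}$. The function $r(z) = \frac{1}{2}\log\left(\frac{1+z^2/w}{1+z^2/v}\right) + \frac{1}{2}\frac{w+\theta^2}{w+z^2} - \frac{1}{2}\frac{v+\theta^2}{v+z^2}$ defined for $z \geq 0$ attains its minimum at $z = |\theta|$, with minimum value $\frac{1}{2}\log\left(\frac{1+\theta^2/w}{1+\theta^2/v}\right)$. -/
/-!
Write `s = θ²`, `t = z²`, `a = (w + t)/(w + s)` and `b = (v + t)/(v + s)`. Then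
`2 (r z - r |θ|) = φ a - φ b` with `φ x = log x + x⁻¹`, a function decreasing on `(0, 1]` and
increasing on `[1, ∞)`. Since `w < v`, `a` lies on the same side of `1` as `b` and farther from
it, so `φ b ≤ φ a`.
-/

open Real

lemma log_add_inv_le_of_mul_sub_one_nonneg {a b : ℝ} (ha : 0 < a) (hb : 0 < b)
    (h : 0 ≤ (a - b) * (b - 1)) : log b + b⁻¹ ≤ log a + a⁻¹ := by
  have hlog : log b - log a ≤ b / a - 1 := by
    rw [← log_div hb.ne' ha.ne']
    exact log_le_sub_one_of_pos (div_pos hb ha)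
  have hfrac : b / a - 1 ≤ a⁻¹ - b⁻¹ := by
    rw [div_sub_one ha.ne', inv_sub_inv ha.ne' hb.ne', div_le_div_iff₀ ha (mul_pos ha hb)]
    nlinarith
  linarith

lemma div_sub_div_mul_div_sub_one_nonneg {w v s t : ℝ} (hws : 0 < w + s) (hwv : w ≤ v) :
    0 ≤ ((w + t) / (w + s) - (v + t) / (v + s)) * ((v + t) / (v + s) - 1) := by
  have hvs : 0 < v + s := by linarith
  have : ((w + t) / (w + s) - (v + t) / (v + s)) * ((v + t) / (v + s) - 1)
      = (t - s) ^ 2 * (v - w) / ((w + s) * (v + s) ^ 2) := by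
    field_simp
    ring
  rw [this]
  exact div_nonneg (mul_nonneg (sq_nonneg _) (by linarith)) (by positivity)

lemma log_ratio_sub_log_ratio {w v s t : ℝ} (hw : 0 < w) (hv : 0 < v) (hs : 0 ≤ s)
    (ht : 0 ≤ t) :
    log ((1 + t / w) / (1 + t / v)) - log ((1 + s / w) / (1 + s / v))
      = log ((w + t) / (w + s)) - log ((v + t) / (v + s)) := by
  rw [← log_div (by positivity) (by positivity), ← log_div (by positivity) (by positivity)]
  congr 1
  field_simp

theorem stmt3 (v w θ : ℝ) (hw : 0 < w) (hwv : w < v)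
    (r : ℝ → ℝ)
    (hr : ∀ z, r z = (1/2)*Real.log ((1+z^2/w)/(1+z^2/v))
        + (1/2)*(w+θ^2)/(w+z^2) - (1/2)*(v+θ^2)/(v+z^2)) :
    (∀ z, 0 ≤ z → r |θ| ≤ r z) ∧
    r |θ| = (1/2)*Real.log ((1+θ^2/w)/(1+θ^2/v)) := by
  have hv : 0 < v := hw.trans hwv
  have hws : 0 < w + θ ^ 2 := by positivity
  have hvs : 0 < v + θ ^ 2 := by positivity
  have hmin : r |θ| = (1/2)*Real.log ((1+θ^2/w)/(1+θ^2/v)) := by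
    rw [hr, sq_abs, mul_div_assoc, mul_div_assoc, div_self hws.ne', div_self hvs.ne']
    ring
  refine ⟨fun z _ => ?_, hmin⟩
  have hφ := log_add_inv_le_of_mul_sub_one_nonneg (by positivity) (by positivity)
    (div_sub_div_mul_div_sub_one_nonneg (t := z ^ 2) hws hwv.le)
  have hlog := log_ratio_sub_log_ratio hw hv (sq_nonneg θ) (sq_nonneg z)
  rw [inv_div, inv_div] at hφ
  rw [hmin, hr z, mul_div_assoc, mul_div_assoc]
  linarith
end

section
/- Let $0 < a_1 \leq a_2 \leq \cdots$ be a nondecreasing sequence of positive reals with $a_i \to \infty$, let $B > 0$, $\varepsilon, \tilde{\varepsilon} > 0$, and for $\lambda > 0$ define $\tau_i^2(\lambda) = \frac{1}{2}\left[(v - w)\sqrt{1 + \frac{4}{2\lambda a_i^2 (v-w)}} - (v + w)\right]_+$ where $w = 1/(1/\varepsilon^2 + 1/\tilde{\varepsilon}^2)$ and $v = \varepsilon^2$. Then the function $\lambda \mapsto \sum_{i=1}^{\infty} a_i^2 \tau_i^2(\lambda)$ is continuous, strictly decreasing on the set where it is positive, takes arbitrarily large values as $\lambda \to 0^+$ and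 tends to $0$ as $\lambda \to \infty$; hence there is a unique $\lambda^* > 0$ with $\sum_{i=1}^{\infty} a_i^2 \tau_i^2(\lambda^*) = B$. Moreover, for each $\lambda > 0$, only finitely many $\tau_i^2(\lambda)$ are nonzero. -/
/-!
Every term has the form `τ_i²(λ) = φ(λ a_i²)` for the single profile `φ = waterFill v w`.
This profile is continuous on `(0, ∞)`, nonincreasing, strictly decreasing where positive,
unbounded near `0⁺`, and vanishes from `x₀ = (v - w) / (2 v w)` on, because
`(v + w)² - (v - w)² = 4 v w`. As `a_i → ∞`, on a half-line `[λ₀, ∞)` only the finitely many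
indices with `λ₀ a_i² < x₀` contribute, so the series is locally a finite sum and inherits
these properties; `λ*` then comes from the intermediate value theorem.
-/

open Filter

open Set Topology

noncomputable def scaledSum (φ : ℝ → ℝ) (b : ℕ → ℝ) (lam : ℝ) : ℝ :=
  ∑' i, b i * φ (lam * b i)

section ScaledSum

variable {φ : ℝ → ℝ} {b : ℕ → ℝ} {x₀ : ℝ}

lemma exists_finset_forall_ge_eq_zero (hφ : ∀ x, x₀ ≤ x → φ x = 0) (hb : ∀ i, 0 ≤ b i)
    (hbtop : Tendsto b atTop atTop) {lam₀ : ℝ} (hlam₀ : 0 < lam₀) :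
    ∃ F : Finset ℕ, ∀ lam, lam₀ ≤ lam → ∀ i ∉ F, φ (lam * b i) = 0 := by
  have hfin : {i | ¬ x₀ ≤ lam₀ * b i}.Finite := by
    rw [← eventually_cofinite, Nat.cofinite_eq_atTop]
    exact (hbtop.const_mul_atTop hlam₀).eventually_ge_atTop x₀
  refine ⟨hfin.toFinset, fun lam hlam i hi => hφ _ ?_⟩
  rw [Finite.mem_toFinset, mem_ofPred_eq, not_not] at hi
  exact hi.trans (mul_le_mul_of_nonneg_right hlam (hb i))

lemma exists_finset_scaledSum_eq_sum (hφ : ∀ x, x₀ ≤ x → φ x = 0) (hb : ∀ i, 0 ≤ b i)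
    (hbtop : Tendsto b atTop atTop) {lam₀ : ℝ} (hlam₀ : 0 < lam₀) :
    ∃ F : Finset ℕ, ∀ lam, lam₀ ≤ lam → scaledSum φ b lam = ∑ i ∈ F, b i * φ (lam * b i) := by
  obtain ⟨F, hF⟩ := exists_finset_forall_ge_eq_zero hφ hb hbtop hlam₀
  exact ⟨F, fun lam hlam => tsum_eq_sum fun i hi => by rw [hF lam hlam i hi, mul_zero]⟩

lemma finite_setOf_ne_zero (hφ : ∀ x, x₀ ≤ x → φ x = 0) (hb : ∀ i, 0 ≤ b i)
    (hbtop : Tendsto b atTop atTop) {lam : ℝ} (hlam : 0 < lam) :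
    {i | φ (lam * b i) ≠ 0}.Finite := by
  obtain ⟨F, hF⟩ := exists_finset_forall_ge_eq_zero hφ hb hbtop hlam
  exact F.finite_toSet.subset fun i hi => by_contra fun hiF => hi (hF lam le_rfl i hiF)

lemma summable_scaledSum_term (hφ : ∀ x, x₀ ≤ x → φ x = 0) (hb : ∀ i, 0 ≤ b i)
    (hbtop : Tendsto b atTop atTop) {lam : ℝ} (hlam : 0 < lam) :
    Summable fun i => b i * φ (lam * b i) := by
  obtain ⟨F, hF⟩ := exists_finset_forall_ge_eq_zero hφ hb hbtop hlam
  exact summable_of_ne_finset_zero fun i hi => by rw [hF lam le_rfl i hi, mul_zero]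

lemma continuousOn_scaledSum (hφ : ∀ x, x₀ ≤ x → φ x = 0) (hb : ∀ i, 0 < b i)
    (hbtop : Tendsto b atTop atTop) (hφc : ContinuousOn φ (Ioi 0)) :
    ContinuousOn (scaledSum φ b) (Ioi 0) := by
  intro lam₀ hlam₀
  obtain ⟨F, hF⟩ := exists_finset_scaledSum_eq_sum hφ (fun i => (hb i).le) hbtop (half_pos hlam₀)
  have hloc : (fun lam => ∑ i ∈ F, b i * φ (lam * b i)) =ᶠ[𝓝 lam₀] scaledSum φ b :=
    eventually_of_mem (Ioi_mem_nhds (half_lt_self hlam₀)) fun lam hlam => (hF lam hlam.le).symm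
  have hterm (i : ℕ) : ContinuousOn (fun lam => b i * φ (lam * b i)) (Ioi 0) :=
    continuousOn_const.mul <|
      hφc.comp (continuousOn_id.mul continuousOn_const) fun _ hx => mul_pos hx (hb i)
  exact (((continuousOn_finsetSum F fun i _ => hterm i).continuousAt
    (Ioi_mem_nhds hlam₀)).congr hloc).continuousWithinAt

lemma strictAntiOn_scaledSum (hφ : ∀ x, x₀ ≤ x → φ x = 0) (hb : ∀ i, 0 < b i)
    (hbtop : Tendsto b atTop atTop) (hanti : AntitoneOn φ (Ioi 0))
    (hstrict : StrictAntiOn φ {x | 0 < x ∧ 0 < φ x}) :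
    StrictAntiOn (scaledSum φ b) {lam | 0 < lam ∧ 0 < scaledSum φ b lam} := by
  rintro lam₁ ⟨hlam₁, -⟩ lam₂ ⟨hlam₂, hpos⟩ hlt
  obtain ⟨F, hF⟩ := exists_finset_scaledSum_eq_sum hφ (fun i => (hb i).le) hbtop hlam₁
  rw [hF lam₂ hlt.le] at hpos
  rw [hF lam₁ le_rfl, hF lam₂ hlt.le]
  have hle (i : ℕ) : φ (lam₂ * b i) ≤ φ (lam₁ * b i) :=
    hanti (mul_pos hlam₁ (hb i)) (mul_pos hlam₂ (hb i)) (by gcongr; exact (hb i).le)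
  obtain ⟨i, hiF, hi⟩ := Finset.exists_lt_of_sum_lt (s := F) (f := fun _ => 0)
    (g := fun i => b i * φ (lam₂ * b i)) (by rwa [Finset.sum_const_zero])
  have hφ₂ : 0 < φ (lam₂ * b i) := pos_of_mul_pos_right hi (hb i).le
  refine Finset.sum_lt_sum (fun i _ => mul_le_mul_of_nonneg_left (hle i) (hb i).le) ⟨i, hiF, ?_⟩
  exact mul_lt_mul_of_pos_left (hstrict ⟨mul_pos hlam₁ (hb i), hφ₂.trans_le (hle i)⟩
    ⟨mul_pos hlam₂ (hb i), hφ₂⟩ (mul_lt_mul_of_pos_right hlt (hb i))) (hb i)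

lemma tendsto_scaledSum_nhdsGT_zero (hφ : ∀ x, x₀ ≤ x → φ x = 0) (hb : ∀ i, 0 < b i)
    (hbtop : Tendsto b atTop atTop) (hφ₀ : ∀ x, 0 ≤ φ x) (hφtop : Tendsto φ (𝓝[>] 0) atTop) :
    Tendsto (scaledSum φ b) (𝓝[>] 0) atTop := by
  have hscale : Tendsto (fun lam => lam * b 0) (𝓝[>] 0) (𝓝[>] 0) := by
    refine tendsto_nhdsWithin_iff.2
      ⟨?_, eventually_nhdsWithin_of_forall fun _ hx => mul_pos hx (hb 0)⟩
    simpa using ((continuous_mul_const (b 0)).tendsto 0).mono_left nhdsWithin_le_nhds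
  refine tendsto_atTop_mono' _ ?_ ((hφtop.comp hscale).const_mul_atTop (hb 0))
  filter_upwards [self_mem_nhdsWithin] with lam hlam
  exact (summable_scaledSum_term hφ (fun i => (hb i).le) hbtop hlam).le_tsum 0
    fun i _ => mul_nonneg (hb i).le (hφ₀ _)

lemma tendsto_scaledSum_atTop (hφ : ∀ x, x₀ ≤ x → φ x = 0) (hb : ∀ i, 0 < b i)
    (hbtop : Tendsto b atTop atTop) : Tendsto (scaledSum φ b) atTop (𝓝 0) := by
  obtain ⟨F, hF⟩ := exists_finset_scaledSum_eq_sum hφ (fun i => (hb i).le) hbtop one_pos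
  have hterm (i : ℕ) : ∀ᶠ lam in atTop, b i * φ (lam * b i) = 0 :=
    ((tendsto_id.atTop_mul_const (hb i)).eventually_ge_atTop x₀).mono fun lam h => by
      rw [hφ (lam * b i) h, mul_zero]
  refine tendsto_const_nhds.congr' ?_
  filter_upwards [eventually_ge_atTop 1, (eventually_all_finset F).2 fun i _ => hterm i]
    with lam hlam hzero
  rw [hF lam hlam, Finset.sum_eq_zero hzero]

end ScaledSum

lemma existsUnique_pos_eq_of_strictAntiOn {f : ℝ → ℝ} (hc : ContinuousOn f (Ioi 0))
    (hanti : StrictAntiOn f {x | 0 < x ∧ 0 < f x}) (h₀ : Tendsto f (𝓝[>] 0) atTop)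
    (htop : Tendsto f atTop (𝓝 0)) {B : ℝ} (hB : 0 < B) : ∃! x, 0 < x ∧ f x = B := by
  obtain ⟨x₁, hx₁B, hx₁⟩ := ((h₀.eventually_gt_atTop B).and self_mem_nhdsWithin).exists
  obtain ⟨x₂, hx₂B, hx₁₂⟩ :=
    ((htop.eventually (gt_mem_nhds hB)).and (eventually_ge_atTop x₁)).exists
  obtain ⟨x, hx, hfx⟩ := intermediate_value_Icc' hx₁₂
    (hc.mono fun y hy => lt_of_lt_of_le hx₁ hy.1) ⟨hx₂B.le, hx₁B.le⟩
  have hxpos : 0 < x := lt_of_lt_of_le hx₁ hx.1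
  exact ⟨x, ⟨hxpos, hfx⟩, fun y ⟨hy, hfy⟩ =>
    hanti.injOn ⟨hy, hfy ▸ hB⟩ ⟨hxpos, hfx ▸ hB⟩ (hfy.trans hfx.symm)⟩

noncomputable def waterFill (v w x : ℝ) : ℝ :=
  1 / 2 * max ((v - w) * √(1 + 4 / (2 * x * (v - w))) - (v + w)) 0

section WaterFill

variable {v w : ℝ}

lemma waterFill_nonneg (x : ℝ) : 0 ≤ waterFill v w x := by
  unfold waterFill; positivity

lemma waterFill_eq_zero (hw : 0 < w) (hwv : w < v) {x : ℝ} (hx : (v - w) / (2 * v * w) ≤ x) :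
    waterFill v w x = 0 := by
  have hd : 0 < v - w := sub_pos.2 hwv
  have hv : 0 < v := hw.trans hwv
  have hx₀ : 0 < x := lt_of_lt_of_le (by positivity) hx
  have hkey : 2 * (v - w) / x ≤ (v + w) ^ 2 - (v - w) ^ 2 := by
    rw [div_le_iff₀ (by positivity)] at hx
    rw [div_le_iff₀ hx₀]
    nlinarith
  have hsqrt : (v - w) * √(1 + 4 / (2 * x * (v - w))) ≤ v + w := by
    rw [← le_div_iff₀' hd, Real.sqrt_le_left (by positivity), div_pow,
      le_div_iff₀ (by positivity)]
    have : 4 / (2 * x * (v - w)) * (v - w) ^ 2 = 2 * (v - w) / x := by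
      field_simp
      norm_num
    nlinarith
  unfold waterFill
  rw [max_eq_right (by linarith), mul_zero]

lemma strictAntiOn_waterFill_arg (hwv : w < v) :
    StrictAntiOn (fun x => (v - w) * √(1 + 4 / (2 * x * (v - w)))) (Ioi 0) := by
  rintro x (hx : 0 < x) y (hy : 0 < y) hxy
  have hd : 0 < v - w := sub_pos.2 hwv
  dsimp only
  gcongr

lemma antitoneOn_waterFill (hwv : w < v) : AntitoneOn (waterFill v w) (Ioi 0) := by
  intro x hx y hy hxy
  unfold waterFill
  gcongr 1 / 2 * max (?_ - _) 0
  exact (strictAntiOn_waterFill_arg hwv).antitoneOn hx hy hxy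

lemma strictAntiOn_waterFill (hwv : w < v) :
    StrictAntiOn (waterFill v w) {x | 0 < x ∧ 0 < waterFill v w x} := by
  rintro x ⟨hx, -⟩ y ⟨hy, hpos⟩ hxy
  have harg := strictAntiOn_waterFill_arg hwv hx hy hxy
  unfold waterFill at hpos ⊢
  have hlevel := (lt_max_iff.1 (pos_of_mul_pos_right hpos (by norm_num))).resolve_right
    (lt_irrefl 0)
  rw [max_eq_left hlevel.le]
  gcongr
  exact lt_of_lt_of_le (by dsimp only at harg; linarith) (le_max_left _ _)

lemma continuousOn_waterFill (hwv : w < v) : ContinuousOn (waterFill v w) (Ioi 0) := by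
  have hd : 0 < v - w := sub_pos.2 hwv
  unfold waterFill
  fun_prop (disch := intro x hx; have : 0 < x := hx; positivity)

lemma tendsto_waterFill_nhdsGT_zero (hwv : w < v) : Tendsto (waterFill v w) (𝓝[>] 0) atTop := by
  have hd : 0 < v - w := sub_pos.2 hwv
  have hinv (x : ℝ) : 4 / (2 * x * (v - w)) = 2 / (v - w) * x⁻¹ := by
    rcases eq_or_ne x 0 with rfl | hx
    · simp
    · field_simp
      norm_num
  have harg : Tendsto (fun x : ℝ => (v - w) * √(1 + 4 / (2 * x * (v - w)))) (𝓝[>] 0) atTop := by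
    simp only [hinv]
    exact (Real.tendsto_sqrt_atTop.comp <| tendsto_atTop_add_const_left _ 1 <|
      tendsto_inv_nhdsGT_zero.const_mul_atTop (by positivity)).const_mul_atTop hd
  refine tendsto_atTop_mono (fun x => ?_)
    ((tendsto_atTop_add_const_right _ (-(v + w)) harg).const_mul_atTop one_half_pos)
  unfold waterFill
  gcongr
  exact le_trans (by linarith) (le_max_left _ _)

end WaterFill

theorem stmt9_general (a : ℕ → ℝ) (hapos : ∀ i, 0 < a i)
    (hatop : Tendsto a atTop atTop)
    (B ε εt : ℝ) (hB : 0 < B) (hε : 0 < ε) (hεt : 0 < εt)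
    (w v : ℝ) (hw : w = 1/(1/ε^2 + 1/εt^2)) (hv : v = ε^2)
    (g : ℝ → ℕ → ℝ)
    (hg : ∀ lam i, g lam i
      = (1/2) * max ((v - w) * Real.sqrt (1 + 4/(2*lam*(a i)^2*(v - w))) - (v + w)) 0)
    (S : ℝ → ℝ) (hS : ∀ lam, S lam = ∑' i, (a i)^2 * g lam i) :
    ContinuousOn S (Set.Ioi 0) ∧
    StrictAntiOn S {lam | 0 < lam ∧ 0 < S lam} ∧
    Tendsto S (nhdsWithin 0 (Set.Ioi 0)) atTop ∧
    Tendsto S atTop (nhds 0) ∧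
    (∃! lam, 0 < lam ∧ S lam = B) ∧
    (∀ lam, 0 < lam → {i | g lam i ≠ 0}.Finite) := by
  have hw₀ : 0 < w := by rw [hw]; positivity
  have hwv : w < v := by
    rw [hw, hv, div_lt_iff₀ (by positivity), mul_add, mul_one_div_cancel (by positivity)]
    exact lt_add_of_pos_right _ (by positivity)
  obtain rfl : g = fun lam i => waterFill v w (lam * a i ^ 2) := by
    funext lam i
    rw [hg, waterFill, ← mul_assoc 2 lam]
  obtain rfl : S = scaledSum (waterFill v w) fun i => a i ^ 2 := funext hS
  have hb (i : ℕ) : 0 < a i ^ 2 := pow_pos (hapos i) 2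
  have hbtop : Tendsto (fun i => a i ^ 2) atTop atTop := (tendsto_pow_atTop two_ne_zero).comp hatop
  have hφ (x : ℝ) : (v - w) / (2 * v * w) ≤ x → waterFill v w x = 0 := waterFill_eq_zero hw₀ hwv
  have hcont := continuousOn_scaledSum hφ hb hbtop (continuousOn_waterFill hwv)
  have hanti := strictAntiOn_scaledSum hφ hb hbtop (antitoneOn_waterFill hwv)
    (strictAntiOn_waterFill hwv)
  have hzero := tendsto_scaledSum_nhdsGT_zero hφ hb hbtop waterFill_nonneg
    (tendsto_waterFill_nhdsGT_zero hwv)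
  have htop := tendsto_scaledSum_atTop hφ hb hbtop
  exact ⟨hcont, hanti, hzero, htop, existsUnique_pos_eq_of_strictAntiOn hcont hanti hzero htop hB,
    fun _ hlam => finite_setOf_ne_zero hφ (fun i => (hb i).le) hbtop hlam⟩

theorem stmt9 (a : ℕ → ℝ) (hapos : ∀ i, 0 < a i) (hamono : Monotone a)
    (hatop : Tendsto a atTop atTop)
    (B ε εt : ℝ) (hB : 0 < B) (hε : 0 < ε) (hεt : 0 < εt)
    (w v : ℝ) (hw : w = 1/(1/ε^2 + 1/εt^2)) (hv : v = ε^2)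
    (g : ℝ → ℕ → ℝ)
    (hg : ∀ lam i, g lam i
      = (1/2) * max ((v - w) * Real.sqrt (1 + 4/(2*lam*(a i)^2*(v - w))) - (v + w)) 0)
    (S : ℝ → ℝ) (hS : ∀ lam, S lam = ∑' i, (a i)^2 * g lam i) :
    ContinuousOn S (Set.Ioi 0) ∧
    StrictAntiOn S {lam | 0 < lam ∧ 0 < S lam} ∧
    Tendsto S (nhdsWithin 0 (Set.Ioi 0)) atTop ∧
    Tendsto S atTop (nhds 0) ∧
    (∃! lam, 0 < lam ∧ S lam = B) ∧
    (∀ lam, 0 < lam → {i | g lam i ≠ 0}.Finite) :=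
  stmt9_general a hapos hatop B ε εt hB hε hεt w v hw hv g hg S hS
end

section
/- Let $d$ be a positive integer, let $\{B_j\}_{j=1}^J$ be a partition of $\{1,\ldots,d\}$ into consecutive blocks with cardinalities $b_j$ satisfying $\max_{1\leq j \leq J-1} b_{j+1}/b_j \leq 1+\eta$ for some $\eta > 0$, let $0 < w < v$, and let $f(x) = \log\left(\frac{1+x/w}{1+x/v}\right) - \frac{(v-w)x}{(v+x)(w+x)}$ for $x \geq 0$. For any nonincreasing sequence $\tau_1^2 \geq \tau_2^2 \geq \cdots \geq \tau_d^2 \geq 0$, define the blockwise-constant sequence $\bar{\tau}_i^2 = \tau_{m_j}^2$ for $i \in B_j$ where $m_j$ is the first index of block $B_j$. Then $\frac{1}{2}\sum_{i=1}^d f(\bar{\tau}_i^2) \leq \frac{b_1}{2}\log(v/w) + (1+\eta)\cdot\frac{1}{2}\sum_{i=1}^d f(\tau_i^2)$. -/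
/-!
The function `f` vanishes at `0`, is nondecreasing (its derivative is
`(v - w) x (v + w + 2x) / ((v + x)(w + x))²`) and is bounded by `log (v / w)`. Since `τ` is
nonincreasing, the constant value `f (τ (m (j+1)))` on block `j + 1` is at most every value
`f (τ i)` on block `j`, so by `b (j+1) ≤ (1 + η) b j` the contribution of block `j + 1` to the
left side is at most `(1 + η)` times the sum of `f ∘ τ` over block `j`. Only the first block is
left over, and it contributes at most `b 1 · log (v / w)`.
-/

open Finset

noncomputable def logRatioGap (v w x : ℝ) : ℝ :=
  Real.log ((1 + x / w) / (1 + x / v)) - (v - w) * x / ((v + x) * (w + x))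

namespace logRatioGap

variable {v w : ℝ}

@[simp] lemma zero : logRatioGap v w 0 = 0 := by simp [logRatioGap]

lemma hasDerivAt (hw : 0 < w) (hv : 0 < v) {x : ℝ} (hx : 0 ≤ x) :
    HasDerivAt (logRatioGap v w) ((v - w) * x * (v + w + 2 * x) / ((v + x) * (w + x)) ^ 2) x := by
  have hwx : 0 < w + x := by linarith
  have hvx : 0 < v + x := by linarith
  have hlin (u : ℝ) : HasDerivAt (fun y => 1 + y / u) (1 / u) x := by
    simpa using ((hasDerivAt_id x).div_const u).const_add 1
  have hw' : 1 + x / w ≠ 0 := by positivity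
  have hv' : 1 + x / v ≠ 0 := by positivity
  have hlog : HasDerivAt (fun y => Real.log ((1 + y / w) / (1 + y / v)))
      ((1 / w * (1 + x / v) - (1 + x / w) * (1 / v)) / (1 + x / v) ^ 2
        / ((1 + x / w) / (1 + x / v))) x :=
    ((hlin w).div (hlin v) hv').log (div_ne_zero hw' hv')
  have hfrac : HasDerivAt (fun y => (v - w) * y / ((v + y) * (w + y)))
      (((v - w) * ((v + x) * (w + x)) - (v - w) * x * (1 * (w + x) + (v + x) * 1))
        / ((v + x) * (w + x)) ^ 2) x := by
    have hden : (v + x) * (w + x) ≠ 0 := by positivity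
    refine (((hasDerivAt_id x).const_mul (v - w)).div
      (((hasDerivAt_id x).const_add v).mul ((hasDerivAt_id x).const_add w)) hden).congr_deriv ?_
    simp
  refine (hlog.sub hfrac).congr_deriv ?_
  field_simp
  ring

lemma monotoneOn (hw : 0 < w) (hwv : w ≤ v) : MonotoneOn (logRatioGap v w) (Set.Ici 0) := by
  have hv : 0 < v := hw.trans_le hwv
  refine monotoneOn_of_hasDerivWithinAt_nonneg (convex_Ici 0)
    (fun x hx => (hasDerivAt hw hv hx).continuousAt.continuousWithinAt)
    (fun x hx => (hasDerivAt hw hv (interior_subset hx)).hasDerivWithinAt) fun x hx => ?_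
  have hx : 0 ≤ x := interior_subset hx
  have : 0 ≤ v - w := by linarith
  positivity

lemma nonneg (hw : 0 < w) (hwv : w ≤ v) {x : ℝ} (hx : 0 ≤ x) : 0 ≤ logRatioGap v w x := by
  simpa using monotoneOn hw hwv Set.self_mem_Ici hx hx

lemma le_log_div (hw : 0 < w) (hwv : w ≤ v) {x : ℝ} (hx : 0 ≤ x) :
    logRatioGap v w x ≤ Real.log (v / w) := by
  have hv : 0 < v := hw.trans_le hwv
  have hratio : (1 + x / w) / (1 + x / v) ≤ v / w := by
    rw [div_le_div_iff₀ (by positivity) hw]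
    field_simp
    nlinarith
  have hfrac : 0 ≤ (v - w) * x / ((v + x) * (w + x)) := by
    have : 0 ≤ v - w := by linarith
    positivity
  have := Real.log_le_log (by positivity) hratio
  rw [logRatioGap]
  linarith

end logRatioGap

/-- Block `j ≥ 1` of the partition with sizes `b` is
`Ico (blockStart b j) (blockStart b j + b j)`. -/
def blockStart (b : ℕ → ℕ) (j : ℕ) : ℕ := 1 + ∑ k ∈ Ico 1 j, b k

namespace blockStart

variable (b : ℕ → ℕ)

@[simp] lemma one : blockStart b 1 = 1 := by simp [blockStart]

lemma succ {j : ℕ} (hj : 1 ≤ j) : blockStart b (j + 1) = blockStart b j + b j := by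
  rw [blockStart, blockStart, sum_Ico_succ_top hj, add_assoc]

lemma succ_eq_one_add_sum (J : ℕ) : blockStart b (J + 1) = 1 + ∑ j ∈ Icc 1 J, b j := by
  rw [blockStart, Ico_add_one_right_eq_Icc]

lemma mono : Monotone (blockStart b) := fun _ _ hjk =>
  Nat.add_le_add_left (sum_le_sum_of_subset (Ico_subset_Ico_right hjk)) 1

lemma lt_of_pos {j J : ℕ} (hj : 1 ≤ j) (hjJ : j ≤ J) (hb : 0 < b j) :
    blockStart b j < blockStart b (J + 1) := by
  have := mono b (show j + 1 ≤ J + 1 by omega)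
  rw [succ b hj] at this
  omega

lemma sum_Ico_eq_sum_blocks {M : Type*} [AddCommMonoid M] (h : ℕ → M) (J : ℕ) :
    ∑ i ∈ Ico 1 (blockStart b (J + 1)), h i
      = ∑ j ∈ Icc 1 J, ∑ i ∈ Ico (blockStart b j) (blockStart b j + b j), h i := by
  induction J with
  | zero => simp
  | succ J ih =>
    rw [sum_Icc_succ_top (by omega), ← ih, ← succ b (by omega : 1 ≤ J + 1),
      sum_Ico_consecutive _ (by simpa using mono b (by omega : 1 ≤ J + 1)) (mono b (by omega))]

end blockStart

lemma sum_Icc_mul_le_head_add (K : ℕ) {η : ℝ} (hη : 0 ≤ 1 + η) (b c T : ℕ → ℝ)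
    (hratio : ∀ j ∈ Icc 1 K, b (j + 1) ≤ (1 + η) * b j) (hc : ∀ j, 0 ≤ c j)
    (hbT : ∀ j ∈ Icc 1 K, b j * c (j + 1) ≤ T j) :
    ∑ j ∈ Icc 1 (K + 1), b j * c j ≤ b 1 * c 1 + (1 + η) * ∑ j ∈ Icc 1 K, T j := by
  induction K with
  | zero => simp
  | succ K ih =>
    have hK : K + 1 ∈ Icc 1 (K + 1) := by simp
    have hstep : b (K + 2) * c (K + 2) ≤ (1 + η) * T (K + 1) :=
      calc b (K + 2) * c (K + 2) ≤ (1 + η) * b (K + 1) * c (K + 2) :=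
            mul_le_mul_of_nonneg_right (hratio _ hK) (hc _)
        _ ≤ (1 + η) * T (K + 1) := by
            rw [mul_assoc]; exact mul_le_mul_of_nonneg_left (hbT _ hK) hη
    have := ih (fun j hj => hratio j (Icc_subset_Icc_right (by omega) hj))
      (fun j hj => hbT j (Icc_subset_Icc_right (by omega) hj))
    rw [sum_Icc_succ_top (by omega : 1 ≤ K + 1 + 1), sum_Icc_succ_top (by omega : 1 ≤ K + 1) T,
      mul_add]
    linarith

theorem sum_Icc_le_of_blockwise_const (d J : ℕ) (hJ : 0 < J) {η : ℝ} (hη : 0 ≤ 1 + η)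
    (b : ℕ → ℕ) (hbpos : ∀ j ∈ Icc 1 J, 0 < b j) (hbsum : ∑ j ∈ Icc 1 J, b j = d)
    (hratio : ∀ j ∈ Icc 1 (J - 1), (b (j + 1) : ℝ) ≤ (1 + η) * (b j : ℝ))
    (a abar : ℕ → ℝ) (ha0 : ∀ i, 0 ≤ a i)
    (ha : ∀ i j, 1 ≤ i → i ≤ j → j ≤ d → a j ≤ a i)
    (habar : ∀ j ∈ Icc 1 J, ∀ i ∈ Ico (blockStart b j) (blockStart b j + b j),
      abar i = a (blockStart b j)) :
    ∑ i ∈ Icc 1 d, abar i ≤ b 1 * a 1 + (1 + η) * ∑ i ∈ Icc 1 d, a i := by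
  obtain ⟨K, rfl⟩ : ∃ K, J = K + 1 := ⟨J - 1, by omega⟩
  rw [Nat.add_sub_cancel] at hratio
  have hend : blockStart b (K + 1 + 1) = d + 1 := by
    rw [blockStart.succ_eq_one_add_sum, hbsum, add_comm]
  have hIcc : Icc 1 d = Ico 1 (blockStart b (K + 1 + 1)) := by
    rw [hend, Ico_add_one_right_eq_Icc]
  set T : ℕ → ℝ := fun j => ∑ i ∈ Ico (blockStart b j) (blockStart b j + b j), a i
  have habar_sum :
      ∑ i ∈ Icc 1 d, abar i = ∑ j ∈ Icc 1 (K + 1), (b j : ℝ) * a (blockStart b j) := by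
    rw [hIcc, blockStart.sum_Ico_eq_sum_blocks]
    refine sum_congr rfl fun j hj => ?_
    simp [sum_congr rfl (habar j hj)]
  have ha_sum : ∑ i ∈ Icc 1 d, a i = ∑ j ∈ Icc 1 (K + 1), T j := by
    rw [hIcc, blockStart.sum_Ico_eq_sum_blocks]
  have hbT : ∀ j ∈ Icc 1 K, (b j : ℝ) * a (blockStart b (j + 1)) ≤ T j := by
    intro j hj
    obtain ⟨hj1, hjK⟩ := mem_Icc.mp hj
    have hnext_le_d : blockStart b (j + 1) ≤ d := by
      have := blockStart.lt_of_pos b (by omega) (by omega : j + 1 ≤ K + 1)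
        (hbpos _ (by simp; omega))
      omega
    have := card_nsmul_le_sum (Ico (blockStart b j) (blockStart b j + b j)) a
      (a (blockStart b (j + 1))) fun i hi => by
      obtain ⟨hi1, hi2⟩ := mem_Ico.mp hi
      refine ha i _ ?_ ?_ hnext_le_d
      · exact le_trans (Nat.le_add_right _ _) hi1
      · rw [blockStart.succ b hj1]; omega
    simpa using this
  have hT0 : 0 ≤ T (K + 1) := sum_nonneg fun i _ => ha0 i
  calc ∑ i ∈ Icc 1 d, abar i
      = ∑ j ∈ Icc 1 (K + 1), (b j : ℝ) * a (blockStart b j) := habar_sum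
    _ ≤ b 1 * a (blockStart b 1) + (1 + η) * ∑ j ∈ Icc 1 K, T j :=
        sum_Icc_mul_le_head_add K hη _ _ T hratio (fun _ => ha0 _) hbT
    _ ≤ b 1 * a 1 + (1 + η) * ∑ i ∈ Icc 1 d, a i := by
        rw [ha_sum, sum_Icc_succ_top (by omega), blockStart.one, mul_add]
        linarith [mul_nonneg hη hT0]

theorem stmt14_general (d J : ℕ) (hJ : 0 < J) (η : ℝ) (hη : 0 < η)
    (v w : ℝ) (hw : 0 < w) (hwv : w < v)
    (b : ℕ → ℕ) (hbpos : ∀ j ∈ Finset.Icc 1 J, 0 < b j)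
    (hbsum : ∑ j ∈ Finset.Icc 1 J, b j = d)
    (hratio : ∀ j ∈ Finset.Icc 1 (J-1), (b (j+1) : ℝ) ≤ (1+η) * (b j : ℝ))
    (m : ℕ → ℕ) (hm : ∀ j, m j = 1 + ∑ k ∈ Finset.Ico 1 j, b k)
    (f : ℝ → ℝ)
    (hf : ∀ x, f x = Real.log ((1+x/w)/(1+x/v)) - (v-w)*x/((v+x)*(w+x)))
    (τ bar : ℕ → ℝ)
    (hτ0 : ∀ i, 0 ≤ τ i)
    (hτmono : ∀ i j, 1 ≤ i → i ≤ j → j ≤ d → τ j ≤ τ i)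
    (hbar : ∀ j ∈ Finset.Icc 1 J, ∀ i ∈ Finset.Ico (m j) (m j + b j), bar i = τ (m j)) :
    (1/2) * ∑ i ∈ Finset.Icc 1 d, f (bar i)
      ≤ ((b 1 : ℝ)/2) * Real.log (v/w)
        + (1+η) * ((1/2) * ∑ i ∈ Finset.Icc 1 d, f (τ i)) := by
  obtain rfl : f = logRatioGap v w := funext hf
  obtain rfl : m = blockStart b := funext hm
  have hblocks := sum_Icc_le_of_blockwise_const d J hJ (by linarith) b hbpos hbsum hratio
    (fun i => logRatioGap v w (τ i)) (fun i => logRatioGap v w (bar i))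
    (fun i => logRatioGap.nonneg hw hwv.le (hτ0 i))
    (fun i j hi hij hjd =>
      logRatioGap.monotoneOn hw hwv.le (hτ0 j) (hτ0 i) (hτmono i j hi hij hjd))
    (fun j hj i hi => by rw [hbar j hj i hi])
  have hhead : (b 1 : ℝ) * logRatioGap v w (τ 1) ≤ b 1 * Real.log (v / w) :=
    mul_le_mul_of_nonneg_left (logRatioGap.le_log_div hw hwv.le (hτ0 1)) (Nat.cast_nonneg _)
  linarith

theorem stmt14 (d J : ℕ) (hd : 0 < d) (hJ : 0 < J) (η : ℝ) (hη : 0 < η)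
    (v w : ℝ) (hw : 0 < w) (hwv : w < v)
    (b : ℕ → ℕ) (hbpos : ∀ j ∈ Finset.Icc 1 J, 0 < b j)
    (hbsum : ∑ j ∈ Finset.Icc 1 J, b j = d)
    (hratio : ∀ j ∈ Finset.Icc 1 (J-1), (b (j+1) : ℝ) ≤ (1+η) * (b j : ℝ))
    (m : ℕ → ℕ) (hm : ∀ j, m j = 1 + ∑ k ∈ Finset.Ico 1 j, b k)
    (f : ℝ → ℝ)
    (hf : ∀ x, f x = Real.log ((1+x/w)/(1+x/v)) - (v-w)*x/((v+x)*(w+x)))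
    (τ bar : ℕ → ℝ)
    (hτ0 : ∀ i, 0 ≤ τ i)
    (hτmono : ∀ i j, 1 ≤ i → i ≤ j → j ≤ d → τ j ≤ τ i)
    (hbar : ∀ j ∈ Finset.Icc 1 J, ∀ i ∈ Finset.Ico (m j) (m j + b j), bar i = τ (m j)) :
    (1/2) * ∑ i ∈ Finset.Icc 1 d, f (bar i)
      ≤ ((b 1 : ℝ)/2) * Real.log (v/w)
        + (1+η) * ((1/2) * ∑ i ∈ Finset.Icc 1 d, f (τ i)) :=
  stmt14_general d J hJ η hη v w hw hwv b hbpos hbsum hratio m hm f hf τ bar hτ0 hτmono hbar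
end
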